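/- arXiv:2511.02185 — 4 statements merged into one kernel-verified Lean document; each statement's English description precedes it below -/
import Mathlib

section
/- Fix l ≥ 1 and work in the ring ℤ_{2^l}. Let x₀, x₁, a, a₁, a₂, a₃, a₄, b₁, b₂, b₃, b₄, p₀, p₁, p₂ ∈ ℤ_{2^l}, set x = x₀ + x₁, and for i = 1,2,3,4 let cᵢ = aᵢ·bᵢ with shares cᵢ⁰ + cᵢ¹ = cᵢ. Define e₁ = p₁ − b₁, e₂ = p₂ − b₂, e₃ = p₂ − b₃, f₁ = a − a₁, f₂ = a − a₂, f₃ = a² − a₃; u₀ = a₁·e₁ + c₁⁰, u₁ = p₁·f₁ + c₁¹ (shares of p₁a); v₀ = a₂·e₂ + c₂⁰, v₁ = p₂·f₂ + c₂¹ (shares of p₂a); w₀ = a₃·e₃ + c₃⁰, w₁ = p₂·f₃ + c₃¹ (shares of p₂a²); f₄ = v₀ − a₄, e₄ = x₁ − b₄, f₅ = x₀ − a. Define z₀ = w₀ + 2·(a₄·(e₄ + f₅) + c₄⁰) + u₀ and z₁ = p₂·(f₅ + x₁)² + w₁ + 2·((f₅ + x₁)·(f₄ + v₁) + c₄¹) +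 p₁·(f₅ + x₁) + u₁ + p₀. Then z₀ + z₁ = p₂·x² + p₁·x + p₀. -/
/-- End-to-end correctness of PrivGNN's secure quadratic polynomial
protocol SQuaPol (Algorithm 2) over `ℤ_{2^l}`. -/
theorem SQuaPol_correct (l : ℕ) (hl : 1 ≤ l)
    (x₀ x₁ a a₁ a₂ a₃ a₄ b₁ b₂ b₃ b₄ p₀ p₁ p₂ : ZMod (2 ^ l))
    (x : ZMod (2 ^ l)) (hx : x = x₀ + x₁)
    (c₁ c₂ c₃ c₄ c₁0 c₁1 c₂0 c₂1 c₃0 c₃1 c₄0 c₄1 : ZMod (2 ^ l))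
    (hc₁ : c₁ = a₁ * b₁) (hc₂ : c₂ = a₂ * b₂)
    (hc₃ : c₃ = a₃ * b₃) (hc₄ : c₄ = a₄ * b₄)
    (hs₁ : c₁0 + c₁1 = c₁) (hs₂ : c₂0 + c₂1 = c₂)
    (hs₃ : c₃0 + c₃1 = c₃) (hs₄ : c₄0 + c₄1 = c₄)
    (e₁ e₂ e₃ f₁ f₂ f₃ u₀ u₁ v₀ v₁ w₀ w₁ f₄ e₄ f₅ z₀ z₁ : ZMod (2 ^ l))
    (he₁ : e₁ = p₁ - b₁) (he₂ : e₂ = p₂ - b₂) (he₃ : e₃ = p₂ - b₃)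
    (hf₁ : f₁ = a - a₁) (hf₂ : f₂ = a - a₂) (hf₃ : f₃ = a ^ 2 - a₃)
    (hu₀ : u₀ = a₁ * e₁ + c₁0) (hu₁ : u₁ = p₁ * f₁ + c₁1)
    (hv₀ : v₀ = a₂ * e₂ + c₂0) (hv₁ : v₁ = p₂ * f₂ + c₂1)
    (hw₀ : w₀ = a₃ * e₃ + c₃0) (hw₁ : w₁ = p₂ * f₃ + c₃1)
    (hf₄ : f₄ = v₀ - a₄) (he₄ : e₄ = x₁ - b₄) (hf₅ : f₅ = x₀ - a)
    (hz₀ : z₀ = w₀ + 2 * (a₄ * (e₄ + f₅) + c₄0) + u₀)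
    (hz₁ : z₁ = p₂ * (f₅ + x₁) ^ 2 + w₁ + 2 * ((f₅ + x₁) * (f₄ + v₁) + c₄1)
                  + p₁ * (f₅ + x₁) + u₁ + p₀) :
    z₀ + z₁ = p₂ * x ^ 2 + p₁ * x + p₀ := by
  subst hx hc₁ hc₂ hc₃ hc₄ he₁ he₂ he₃ hf₁ hf₂ hf₃ hu₀ hu₁ hv₀ hv₁ hw₀ hw₁ hf₄ he₄ hf₅ hz₀ hz₁
  linear_combination hs₁ + (2 * (x₀ + x₁ - a)) * hs₂ + hs₃ + 2 * hs₄
end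

section
/- Fix l ≥ 1 and let x₀, x₁ ∈ {0, 1, …, 2^l − 1} be natural numbers. Let x = (x₀ + x₁) mod 2^l, y₀ = x₀ mod 2^{l−1}, and y₁ = x₁ mod 2^{l−1}. Define MSB(u) = ⌊u / 2^{l−1}⌋ for u ∈ {0,…,2^l−1}. Then MSB(x) = MSB(x₀) ⊕ MSB(x₁) ⊕ 1{2^{l−1} − y₀ − 1 < y₁}, where ⊕ is XOR of bits and 1{·} is the indicator of the stated strict inequality. -/
lemma msb_aux (m : ℕ) (hm : 0 < m) (r b : ℕ) (h1 : b * m ≤ r) (h2 : r < (b + 1) * m) :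
    r / m = b := Nat.div_eq_of_lt_le h1 h2

/-- The MSB decomposition used in PrivGNN's secure DReLU protocol:
`MSB(x) = MSB(x₀) ⊕ MSB(x₁) ⊕ 1{2^{l−1} − y₀ − 1 < y₁}` where
`x = (x₀ + x₁) mod 2^l`, `yᵧ = xᵧ mod 2^{l−1}`. -/
theorem msb_decomposition (l : ℕ) (hl : 1 ≤ l) (x₀ x₁ : ℕ)
    (h₀ : x₀ < 2 ^ l) (h₁ : x₁ < 2 ^ l) :
    ((x₀ + x₁) % 2 ^ l) / 2 ^ (l - 1) =
      (x₀ / 2 ^ (l - 1)) ^^^ (x₁ / 2 ^ (l - 1)) ^^^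
        (if 2 ^ (l - 1) - (x₀ % 2 ^ (l - 1)) - 1 < x₁ % 2 ^ (l - 1)
          then 1 else 0) := by
  set m := 2 ^ (l - 1) with hmdef
  have hm : 0 < m := pow_pos (by norm_num) _
  have h2m : 2 ^ l = 2 * m := by
    rw [hmdef, ← pow_succ']
    congr 1
    omega
  have d₀ := Nat.div_add_mod x₀ m
  have d₁ := Nat.div_add_mod x₁ m
  have hy₀ : x₀ % m < m := Nat.mod_lt _ hm
  have hy₁ : x₁ % m < m := Nat.mod_lt _ hm
  have ha₀ : x₀ / m < 2 := by
    rw [Nat.div_lt_iff_lt_mul hm]; omega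
  have ha₁ : x₁ / m < 2 := by
    rw [Nat.div_lt_iff_lt_mul hm]; omega
  rw [h2m]
  have key : ∀ r, r < 4 * m → r % (2 * m) / m = (r / m) % 2 := by
    intro r hr
    rcases Nat.lt_or_ge r (2 * m) with h | h
    · rw [Nat.mod_eq_of_lt h]
      rcases Nat.lt_or_ge r m with h' | h'
      · rw [Nat.div_eq_of_lt h']
      · rw [msb_aux m hm r 1 (by omega) (by omega)]
    · have : r % (2 * m) = r - 2 * m := by
        rw [Nat.mod_eq_sub_mod h, Nat.mod_eq_of_lt (by omega)]
      rw [this]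
      rcases Nat.lt_or_ge r (3 * m) with h' | h'
      · rw [msb_aux m hm (r - 2 * m) 0 (by omega) (by omega),
          msb_aux m hm r 2 (by omega) (by omega)]
      · rw [msb_aux m hm (r - 2 * m) 1 (by omega) (by omega),
          msb_aux m hm r 3 (by omega) (by omega)]
  rw [key (x₀ + x₁) (by omega)]
  have hsum : (x₀ + x₁) / m = x₀ / m + x₁ / m + (x₀ % m + x₁ % m) / m := by
    have e : x₀ + x₁ = m * (x₀ / m + x₁ / m) + (x₀ % m + x₁ % m) := by
      rw [Nat.mul_add]; omega
    rw [e, Nat.mul_add_div hm]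
  rw [hsum]
  have hcarry : (x₀ % m + x₁ % m) / m = if m - x₀ % m - 1 < x₁ % m then 1 else 0 := by
    split_ifs with h
    · exact msb_aux m hm _ 1 (by omega) (by omega)
    · exact Nat.div_eq_of_lt (by omega)
  rw [hcarry]
  have ea₀ : x₀ / m = 0 ∨ x₀ / m = 1 := by interval_cases h : x₀ / m <;> simp
  have ea₁ : x₁ / m = 0 ∨ x₁ / m = 1 := by interval_cases h : x₁ / m <;> simp
  rcases ea₀ with e₀ | e₀ <;>
    rcases ea₁ with e₁ | e₁ <;>
      rw [e₀, e₁] <;> split_ifs <;> decide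
end

section
/- Fix l ≥ 1, let x, a ∈ {0, 1, …, 2^l − 1}, and let c ∈ {0, 1}. Let x̂ = (x + a) mod 2^l, let a' = (2^l − a) mod 2^l, let y₀ = x̂ mod 2^{l−1}, and let y₁ = a' mod 2^{l−1}. Define MSB(u) = ⌊u / 2^{l−1}⌋ for u ∈ {0,…,2^l−1} and DReLU(x) = 1{x < 2^{l−1}}. Then DReLU(x) ⊕ c = MSB(x̂) ⊕ 1{2^{l−1} − y₀ − 1 < y₁} ⊕ MSB(a') ⊕ 1 ⊕ c, where ⊕ is XOR of bits. -/
/-!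
Write `h = 2^{l-1}`. Since `a' ≡ -a (mod 2h)`, the input is recovered as `x = (x̂ + a') mod 2h`,
and the top bit of a sum modulo `2h` is the XOR of the top bits of the summands with the carry
out of the low `l - 1` bits. That carry is `1{h ≤ y₀ + y₁} = 1{h - y₀ - 1 < y₁}`, and
`DReLU(x) = MSB(x) ⊕ 1`.
-/

namespace Nat

lemma add_mod_two_eq_xor_of_lt_two {i j k : ℕ} (hi : i < 2) (hj : j < 2) (hk : k < 2) :
    (i + j + k) % 2 = i ^^^ j ^^^ k := by
  interval_cases i <;> interval_cases j <;> interval_cases k <;> rfl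

lemma add_mod_mul_two_div_eq_xor {u v h : ℕ} (hu : u < h * 2) (hv : v < h * 2) :
    (u + v) % (h * 2) / h = u / h ^^^ v / h ^^^ (if h ≤ u % h + v % h then 1 else 0) := by
  have hh : 0 < h := by omega
  rw [mod_mul_right_div_self, Nat.add_div hh]
  exact add_mod_two_eq_xor_of_lt_two (Nat.div_lt_of_lt_mul hu) (Nat.div_lt_of_lt_mul hv)
    (by split_ifs <;> norm_num)

lemma add_mod_add_sub_mod {x a n : ℕ} (hx : x < n) (ha : a ≤ n) :
    ((x + a) % n + (n - a) % n) % n = x := by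
  rw [← add_mod, add_assoc, Nat.add_sub_of_le ha, add_mod_right, mod_eq_of_lt hx]

lemma ite_lt_eq_div_xor_one {x h : ℕ} (hx : x < h * 2) :
    (if x < h then 1 else 0) = x / h ^^^ 1 := by
  split_ifs with hxh
  · rw [div_eq_of_lt hxh]; rfl
  · rw [Nat.div_eq_of_lt_le (k := 1) (by omega) (by omega)]; rfl

end Nat

theorem masked_drelu_general (l : ℕ) (hl : 1 ≤ l) (x a : ℕ)
    (hx : x < 2 ^ l) (ha : a < 2 ^ l) (c : ℕ)
    (xhat a' y₀ y₁ : ℕ)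
    (hxhat : xhat = (x + a) % 2 ^ l)
    (ha' : a' = (2 ^ l - a) % 2 ^ l)
    (hy₀ : y₀ = xhat % 2 ^ (l - 1))
    (hy₁ : y₁ = a' % 2 ^ (l - 1)) :
    (if x < 2 ^ (l - 1) then 1 else 0) ^^^ c =
      (xhat / 2 ^ (l - 1)) ^^^
        (if 2 ^ (l - 1) - y₀ - 1 < y₁ then 1 else 0) ^^^
        (a' / 2 ^ (l - 1)) ^^^ 1 ^^^ c := by
  set h := 2 ^ (l - 1)
  have hN : 2 ^ l = h * 2 := by rw [← pow_succ, Nat.sub_add_cancel hl]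
  rw [hN] at hx ha hxhat ha'
  have hx_eq : x = (xhat + a') % (h * 2) := by
    rw [hxhat, ha', Nat.add_mod_add_sub_mod hx ha.le]
  have hy₀_lt : y₀ < h := hy₀ ▸ Nat.mod_lt _ (by positivity)
  have hcarry : h - y₀ - 1 < y₁ ↔ h ≤ xhat % h + a' % h := by omega
  have hxhat_lt : xhat < h * 2 := hxhat ▸ Nat.mod_lt _ (by positivity)
  have ha'_lt : a' < h * 2 := ha' ▸ Nat.mod_lt _ (by positivity)
  rw [Nat.ite_lt_eq_div_xor_one hx, hx_eq, Nat.add_mod_mul_two_div_eq_xor hxhat_lt ha'_lt,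
    if_congr hcarry rfl rfl]
  ac_rfl

/-- The masked-DReLU decomposition (Eq. 5) underlying PrivGNN's secure DReLU
protocol: with `x̂ = (x + a) mod 2^l`, `a' = (2^l − a) mod 2^l`,
`y₀ = x̂ mod 2^{l−1}`, `y₁ = a' mod 2^{l−1}`,
`DReLU(x) ⊕ c = MSB(x̂) ⊕ 1{2^{l−1} − y₀ − 1 < y₁} ⊕ MSB(a') ⊕ 1 ⊕ c`. -/
theorem masked_drelu (l : ℕ) (hl : 1 ≤ l) (x a : ℕ)
    (hx : x < 2 ^ l) (ha : a < 2 ^ l) (c : ℕ) (hc : c < 2)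
    (xhat a' y₀ y₁ : ℕ)
    (hxhat : xhat = (x + a) % 2 ^ l)
    (ha' : a' = (2 ^ l - a) % 2 ^ l)
    (hy₀ : y₀ = xhat % 2 ^ (l - 1))
    (hy₁ : y₁ = a' % 2 ^ (l - 1)) :
    (if x < 2 ^ (l - 1) then 1 else 0) ^^^ c =
      (xhat / 2 ^ (l - 1)) ^^^
        (if 2 ^ (l - 1) - y₀ - 1 < y₁ then 1 else 0) ^^^
        (a' / 2 ^ (l - 1)) ^^^ 1 ^^^ c :=
  masked_drelu_general l hl x a hx ha c xhat a' y₀ y₁ hxhat ha' hy₀ hy₁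
end

section
/- Fix l ≥ 1 and work with residues modulo 2^l identified with their canonical representatives in {0,…,2^l−1}; let MSB(u) = ⌊u / 2^{l−1}⌋ and DReLU(u) = 1{u < 2^{l−1}}. Let x₀, x₁, a₀, a₁ be residues modulo 2^l, set x = x₀ + x₁ (mod 2^l) and a = a₀ + a₁ (mod 2^l), and let c ∈ {0,1}. Online, each party γ ∈ {0,1} sends f_γ = x_γ + a_γ (mod 2^l); let x̂ = f₀ + f₁ (mod 2^l) and f = x̂ mod 2^{l−1}, and let y₁ = ((2^l − a) mod 2^l) mod 2^{l−1}. Suppose the bits z̃₀, z̃₁ satisfy z̃₀ ⊕ z̃₁ = 1{2^{l−1} − f − 1 < y₁} (correctness of the distributed comparison function evaluation), and the bits r₀, r₁ satisfy r₀ ⊕ r₁ = c ⊕ MSB((2^l − a) mod 2^l) ⊕ 1. Define the output bits z_γ = γ·MSB(x̂) ⊕ r_γ ⊕ z̃_γ for γ ∈ {0,1} (so the MSB(x̂) term appears only for γ = 1). Then z₀ ⊕ z₁ = DReLU(x) ⊕ c. -/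
lemma xor_bit (p q : ℕ) (hp : p < 2) (hq : q < 2) : p ^^^ q = (p + q) % 2 := by
  interval_cases p <;> interval_cases q <;> decide

/-- End-to-end correctness of PrivGNN's secure DReLU protocol (Algorithm 3):
with `x = x₀ + x₁` and mask `a = a₀ + a₁` in `ℤ_{2^l}`, public
`x̂ = (x₀ + a₀) + (x₁ + a₁)`, `f = x̂ mod 2^{l−1}`,
`y₁ = ((2^l − a) mod 2^l) mod 2^{l−1}`, and bits satisfying
`z̃₀ ⊕ z̃₁ = 1{2^{l−1} − f − 1 < y₁}` and
`r₀ ⊕ r₁ = c ⊕ MSB(2^l − a) ⊕ 1`, the output bits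
`z₀ = r₀ ⊕ z̃₀`, `z₁ = MSB(x̂) ⊕ r₁ ⊕ z̃₁` satisfy
`z₀ ⊕ z₁ = DReLU(x) ⊕ c`. -/
theorem SDReLU_correct (l : ℕ) (hl : 1 ≤ l)
    (x₀ x₁ a₀ a₁ x a : ZMod (2 ^ l))
    (hx : x = x₀ + x₁) (ha : a = a₀ + a₁)
    (c : ℕ) (hc : c < 2)
    (f₀ f₁ xhat : ZMod (2 ^ l))
    (hf₀ : f₀ = x₀ + a₀) (hf₁ : f₁ = x₁ + a₁) (hxhat : xhat = f₀ + f₁)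
    (f y₁ : ℕ)
    (hf : f = xhat.val % 2 ^ (l - 1))
    (hy₁ : y₁ = (-a).val % 2 ^ (l - 1))
    (zt₀ zt₁ r₀ r₁ : ℕ)
    (hzt₀ : zt₀ < 2) (hzt₁ : zt₁ < 2) (hr₀ : r₀ < 2) (hr₁ : r₁ < 2)
    (hzt : zt₀ ^^^ zt₁ = if 2 ^ (l - 1) - f - 1 < y₁ then 1 else 0)
    (hr : r₀ ^^^ r₁ = c ^^^ ((-a).val / 2 ^ (l - 1)) ^^^ 1)
    (z₀ z₁ : ℕ)
    (hz₀ : z₀ = (0 * (xhat.val / 2 ^ (l - 1))) ^^^ r₀ ^^^ zt₀)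
    (hz₁ : z₁ = (1 * (xhat.val / 2 ^ (l - 1))) ^^^ r₁ ^^^ zt₁) :
    z₀ ^^^ z₁ = (if x.val < 2 ^ (l - 1) then 1 else 0) ^^^ c := by
  haveI : NeZero (2 ^ l) := ⟨by positivity⟩
  have hH : 0 < 2 ^ (l - 1) := by positivity
  have hN : 2 ^ l = 2 ^ (l - 1) * 2 := by
    conv_lhs => rw [show l = (l - 1) + 1 by omega]
    rw [pow_succ]
  set H := 2 ^ (l - 1) with hHdef
  set u := xhat.val with hu
  set A := (-a).val with hA
  have hxeq : x = xhat + (-a) := by subst hxhat hf₀ hf₁ hx ha; ring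
  have hxval : x.val = (u + A) % (2 ^ l) := by
    rw [hxeq, ZMod.val_add]
  have hulb : u < 2 ^ l := ZMod.val_lt _
  have hAlb : A < 2 ^ l := ZMod.val_lt _
  -- decompose
  set b := u / H with hb
  set d := A / H with hd
  have hudm : H * b + u % H = u := Nat.div_add_mod u H
  have hAdm : H * d + A % H = A := Nat.div_add_mod A H
  have hfu : f = u % H := hf
  have hyA : y₁ = A % H := hy₁
  have hfH : u % H < H := Nat.mod_lt _ hH
  have hyH : A % H < H := Nat.mod_lt _ hH
  have hb2 : b < 2 := by
    rw [hb]; apply Nat.div_lt_of_lt_mul; omega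
  have hd2 : d < 2 := by
    rw [hd]; apply Nat.div_lt_of_lt_mul; omega
  -- x.val explicit
  have hxv2 : x.val = u + A ∨ x.val + 2 ^ l = u + A := by
    rcases Nat.lt_or_ge (u + A) (2 ^ l) with h | h
    · left; rw [hxval, Nat.mod_eq_of_lt h]
    · right
      rw [hxval, Nat.mod_eq_sub_mod h, Nat.mod_eq_of_lt (by omega)]
      omega
  set carry := (if H - f - 1 < y₁ then 1 else 0 : ℕ) with hcarry
  set D := (if x.val < H then 1 else 0 : ℕ) with hD
  have hcarry2 : carry < 2 := by rw [hcarry]; split <;> omega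
  have hD2 : D < 2 := by rw [hD]; split <;> omega
  have hkey : (b + d + carry + D) % 2 = 1 := by
    rw [hcarry, hD]
    subst hfu hyA
    interval_cases b <;> interval_cases d <;>
      split <;> split <;> omega
  -- now pure xor arithmetic
  have e1 : zt₀ ^^^ zt₁ = carry := hzt
  have e2 : r₀ ^^^ r₁ = c ^^^ d ^^^ 1 := hr
  rw [xor_bit zt₀ zt₁ hzt₀ hzt₁] at e1
  rw [xor_bit r₀ r₁ hr₀ hr₁, xor_bit c d hc hd2,
    xor_bit _ 1 (by omega) (by omega)] at e2
  rw [hz₀, hz₁]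
  simp only [Nat.zero_mul, Nat.one_mul, Nat.zero_xor]
  rw [xor_bit r₀ zt₀ hr₀ hzt₀, xor_bit b r₁ hb2 hr₁,
    xor_bit _ zt₁ (by omega) hzt₁,
    xor_bit _ _ (by omega) (by omega),
    xor_bit D c hD2 hc]
  omega
end
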